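/- arXiv:1107.2620 — 4 statements merged into one kernel-verified Lean document; each statement's English description precedes it below -/
import Mathlib

section
/- For n ≥ 2, the function φ₁'(ξ) = (ξ^{-2n} + 2 + ξ^{2n})/ξ · ∫₀^ξ s^{2n+1}/(1+s^{2n})² ds satisfies the linear ODE φ₁'' + [(2n+1) − (2n−1)ξ^{2n}]/(ξ(1+ξ^{2n})) · φ₁' = 1 for all ξ > 0. -/
/-!
With `m = 2n`, the prefactor `A(ξ) = (ξ^{-m} + 2 + ξ^m)/ξ = (1 + ξ^m)² / ξ^{m+1}`, which is
`4 / (ξ sin² θ₀)`, solves the homogeneous equation `A' + p A = 0` and is the reciprocal of the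
integrand `ξ^{m+1}/(1 + ξ^m)²`. Hence `g = A · ∫₀^ξ` satisfies `g' + p g = A · (integrand) = 1`
(variation of constants). Near `0` the integrand is at most `s^{m+1}`, so
`0 ≤ g(ξ) ≤ (1 + ξ^m)² ξ / (m + 2) → 0`.
-/

open Filter Set Topology intervalIntegral

theorem deriv_mul_add_mul_of_hasDerivAt {A I : ℝ → ℝ} {p a x : ℝ}
    (hA : HasDerivAt A (-(p * A x)) x) (hI : HasDerivAt I a x) :
    deriv (fun y => A y * I y) x + p * (A x * I x) = A x * a := by
  rw [(hA.fun_mul hI).deriv]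
  ring

namespace EquivariantLLG

variable (m : ℕ)

noncomputable def prefactor (x : ℝ) : ℝ := ((x ^ m)⁻¹ + 2 + x ^ m) / x

noncomputable def integrand (s : ℝ) : ℝ := s ^ (m + 1) / (1 + s ^ m) ^ 2

noncomputable def coeff (x : ℝ) : ℝ := ((m + 1 : ℝ) - (m - 1) * x ^ m) / (x * (1 + x ^ m))

noncomputable def phiOneDeriv (x : ℝ) : ℝ := prefactor m x * ∫ s in (0 : ℝ)..x, integrand m s

variable {m}

theorem prefactor_pos {x : ℝ} (hx : 0 < x) : 0 < prefactor m x := by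
  simp only [prefactor]
  positivity

theorem integrand_nonneg {s : ℝ} (hs : 0 ≤ s) : 0 ≤ integrand m s := by
  simp only [integrand]
  have : 0 ≤ s ^ m := pow_nonneg hs m
  positivity

theorem hasDerivAt_prefactor {x : ℝ} (hx : 0 < x) :
    HasDerivAt (prefactor m) (-(coeff m x * prefactor m x)) x := by
  have hxm : x ^ m ≠ 0 := pow_ne_zero _ hx.ne'
  have hpow : HasDerivAt (fun y : ℝ => y ^ m) (m * x ^ (m - 1)) x := hasDerivAt_pow m x
  refine (((hpow.inv hxm).add_const 2).add hpow).div (hasDerivAt_id x) hx.ne' |>.congr_deriv ?_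
  have h1 : 0 < 1 + x ^ m := by positivity
  rcases m with _ | k
  · simp only [prefactor, coeff, id, Pi.add_apply, Pi.inv_apply]
    norm_num
    field_simp
  · simp only [prefactor, coeff, Nat.add_sub_cancel, id, Pi.add_apply, Pi.inv_apply, pow_succ]
    field_simp
    push_cast
    ring

theorem prefactor_mul_integrand {x : ℝ} (hx : 0 < x) : prefactor m x * integrand m x = 1 := by
  have h1 : 0 < 1 + x ^ m := by positivity
  simp only [prefactor, integrand]
  field_simp
  ring

theorem continuousOn_integrand : ContinuousOn (integrand m) (Ici 0) := by
  refine ((continuous_pow _).continuousOn).div (by fun_prop) fun s hs => ?_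
  have : 0 ≤ s ^ m := pow_nonneg hs m
  positivity

theorem intervalIntegrable_integrand {x : ℝ} (hx : 0 ≤ x) :
    IntervalIntegrable (integrand m) MeasureTheory.volume 0 x :=
  (continuousOn_integrand.mono (by simp [uIcc_of_le hx, Icc_subset_Ici_self])).intervalIntegrable

theorem hasDerivAt_integral_integrand {x : ℝ} (hx : 0 < x) :
    HasDerivAt (fun y => ∫ s in (0 : ℝ)..y, integrand m s) (integrand m x) x := by
  have hcont : ContinuousOn (integrand m) (Ioi 0) := continuousOn_integrand.mono Ioi_subset_Ici_self
  exact integral_hasDerivAt_right (intervalIntegrable_integrand hx.le)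
    (hcont.stronglyMeasurableAtFilter isOpen_Ioi x hx) (hcont.continuousAt (Ioi_mem_nhds hx))

theorem deriv_phiOneDeriv_add_coeff_mul {x : ℝ} (hx : 0 < x) :
    deriv (phiOneDeriv m) x + coeff m x * phiOneDeriv m x = 1 :=
  (deriv_mul_add_mul_of_hasDerivAt (hasDerivAt_prefactor hx)
      (hasDerivAt_integral_integrand hx)).trans (prefactor_mul_integrand hx)

theorem integral_integrand_le {x : ℝ} (hx : 0 ≤ x) :
    ∫ s in (0 : ℝ)..x, integrand m s ≤ x ^ (m + 2) / (m + 2) :=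
  calc ∫ s in (0 : ℝ)..x, integrand m s
      ≤ ∫ s in (0 : ℝ)..x, s ^ (m + 1) := by
        refine integral_mono_on hx (intervalIntegrable_integrand hx)
          ((continuous_pow _).intervalIntegrable _ _) fun s hs => ?_
        have : 0 ≤ s ^ m := pow_nonneg hs.1 m
        exact div_le_self (pow_nonneg hs.1 _) (by nlinarith)
    _ = x ^ (m + 2) / (m + 2) := by
        rw [integral_pow]
        push_cast
        ring_nf

theorem phiOneDeriv_le {x : ℝ} (hx : 0 < x) : phiOneDeriv m x ≤ (1 + x ^ m) ^ 2 * x / (m + 2) :=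
  calc phiOneDeriv m x ≤ prefactor m x * (x ^ (m + 2) / (m + 2)) :=
        mul_le_mul_of_nonneg_left (integral_integrand_le hx.le) (prefactor_pos hx).le
    _ = (1 + x ^ m) ^ 2 * x / (m + 2) := by
        simp only [prefactor]
        field_simp
        ring

theorem tendsto_phiOneDeriv : Tendsto (phiOneDeriv m) (𝓝[>] 0) (𝓝 0) := by
  have hbound : Tendsto (fun x : ℝ => (1 + x ^ m) ^ 2 * x / (m + 2)) (𝓝[>] 0) (𝓝 0) := by
    have hcont : Continuous fun x : ℝ => (1 + x ^ m) ^ 2 * x / (m + 2) := by fun_prop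
    simpa using (hcont.tendsto 0).mono_left nhdsWithin_le_nhds
  refine squeeze_zero' ?_ ?_ hbound <;> filter_upwards [self_mem_nhdsWithin] with x (hx : 0 < x)
  · exact mul_nonneg (prefactor_pos hx).le (integral_nonneg hx.le fun s hs => integrand_nonneg hs.1)
  · exact phiOneDeriv_le hx

end EquivariantLLG

open EquivariantLLG in
theorem stmt2_general (n : ℕ) :
    (∀ ξ : ℝ, 0 < ξ →
      deriv (fun x : ℝ =>
          ((x ^ (2 * n))⁻¹ + 2 + x ^ (2 * n)) / x
            * ∫ s in (0:ℝ)..x, s ^ (2 * n + 1) / (1 + s ^ (2 * n)) ^ 2) ξ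
        + ((2 * (n : ℝ) + 1) - (2 * (n : ℝ) - 1) * ξ ^ (2 * n)) / (ξ * (1 + ξ ^ (2 * n)))
            * (((ξ ^ (2 * n))⁻¹ + 2 + ξ ^ (2 * n)) / ξ
                * ∫ s in (0:ℝ)..ξ, s ^ (2 * n + 1) / (1 + s ^ (2 * n)) ^ 2) = 1)
    ∧ Filter.Tendsto (fun ξ : ℝ =>
          ((ξ ^ (2 * n))⁻¹ + 2 + ξ ^ (2 * n)) / ξ
            * ∫ s in (0:ℝ)..ξ, s ^ (2 * n + 1) / (1 + s ^ (2 * n)) ^ 2)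
        (nhdsWithin 0 (Set.Ioi 0)) (nhds 0) := by
  have hcoeff (ξ : ℝ) : coeff (2 * n) ξ
      = ((2 * (n : ℝ) + 1) - (2 * (n : ℝ) - 1) * ξ ^ (2 * n)) / (ξ * (1 + ξ ^ (2 * n))) := by
    push_cast [coeff]
    rfl
  refine ⟨fun ξ hξ => ?_, tendsto_phiOneDeriv⟩
  rw [← hcoeff]
  exact deriv_phiOneDeriv_add_coeff_mul hξ

/-- For `n ≥ 2`, the function
`g(ξ) = (ξ^{-2n} + 2 + ξ^{2n})/ξ · ∫₀^ξ s^{2n+1}/(1+s^{2n})² ds`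
satisfies `g' + [(2n+1) − (2n−1)ξ^{2n}]/(ξ(1+ξ^{2n})) · g = 1` for all `ξ > 0`
(i.e. `φ₁' = g` solves the ODE for `φ₁`), together with the boundary condition
`g(ξ) → 0` as `ξ → 0⁺`. -/
theorem stmt2 (n : ℕ) (hn : 2 ≤ n) :
    (∀ ξ : ℝ, 0 < ξ →
      deriv (fun x : ℝ =>
          ((x ^ (2 * n))⁻¹ + 2 + x ^ (2 * n)) / x
            * ∫ s in (0:ℝ)..x, s ^ (2 * n + 1) / (1 + s ^ (2 * n)) ^ 2) ξ
        + ((2 * (n : ℝ) + 1) - (2 * (n : ℝ) - 1) * ξ ^ (2 * n)) / (ξ * (1 + ξ ^ (2 * n)))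
            * (((ξ ^ (2 * n))⁻¹ + 2 + ξ ^ (2 * n)) / ξ
                * ∫ s in (0:ℝ)..ξ, s ^ (2 * n + 1) / (1 + s ^ (2 * n)) ^ 2) = 1)
    ∧ Filter.Tendsto (fun ξ : ℝ =>
          ((ξ ^ (2 * n))⁻¹ + 2 + ξ ^ (2 * n)) / ξ
            * ∫ s in (0:ℝ)..ξ, s ^ (2 * n + 1) / (1 + s ^ (2 * n)) ^ 2)
        (nhdsWithin 0 (Set.Ioi 0)) (nhds 0) :=
  stmt2_general n
end

section
/- Let g(ξ) = (ξ^{-2n}+2+ξ^{2n})/ξ · ∫₀^ξ s^{2n+1}/(1+s^{2n})² ds with n ≥ 2 and E_n = ∫₀^∞ s^{2n+1}/(1+s^{2n})² ds. Then g(ξ) − E_n ξ^{2n−1} + ξ/(2n−2) → 0 as ξ → ∞. -/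
/-!
With `m = 2n` and `u = s^m` the integrand is `s u / (1 + u)^2 = s / u + O(s / u^2)`, i.e.
`s^(1-m) + O(s^(1-2m))`, so the tail `∫_ξ^∞` equals `ξ^(2-m)/(m-2) + O(ξ^(2-2m))`.
Writing `∫_0^ξ = E - ∫_ξ^∞`, the term `ξ^m/ξ · ∫_0^ξ` produces `E ξ^(m-1) - ξ/(m-2) + O(ξ^(1-m))`,
while `(ξ^(-m) + 2)/ξ · ∫_0^ξ` is a vanishing factor times a bounded one.
-/

open MeasureTheory Set Real Filter Topology

noncomputable def profileIntegrand (m : ℕ) (s : ℝ) : ℝ := s ^ (m + 1) / (1 + s ^ m) ^ 2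

lemma mul_div_one_add_sq_le {s u : ℝ} (hs : 0 ≤ s) (hu : 0 < u) :
    s * u / (1 + u) ^ 2 ≤ s / u := by
  rw [div_le_div_iff₀ (by positivity) hu]
  nlinarith [mul_nonneg hs hu.le, mul_nonneg (mul_nonneg hs hu.le) hu.le]

lemma abs_mul_div_one_add_sq_sub_div_le {s u : ℝ} (hs : 0 ≤ s) (hu : 0 < u) :
    |s * u / (1 + u) ^ 2 - s / u| ≤ 2 * (s / u ^ 2) := by
  have hdiff : s / u - s * u / (1 + u) ^ 2 = s * (1 + 2 * u) / (u * (1 + u) ^ 2) := by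
    field_simp
    ring
  rw [abs_sub_comm, hdiff, abs_of_nonneg (by positivity), mul_div_assoc',
    div_le_div_iff₀ (by positivity) (by positivity)]
  nlinarith [mul_nonneg hs hu.le, mul_nonneg (mul_nonneg hs hu.le) hu.le]

lemma rpow_one_sub_natCast {s : ℝ} (hs : 0 < s) (k : ℕ) : s ^ ((1 : ℝ) - k) = s / s ^ k := by
  rw [rpow_sub hs, rpow_one, rpow_natCast]

lemma pow_sub_one_mul_rpow {ξ : ℝ} (hξ : 0 < ξ) {m : ℕ} (hm : 1 ≤ m) (r : ℝ) :
    ξ ^ (m - 1) * ξ ^ r = ξ ^ ((m : ℝ) - 1 + r) := by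
  rw [← rpow_natCast, Nat.cast_sub hm, Nat.cast_one, ← rpow_add hξ]

lemma integral_Ioi_rpow_one_sub {a ξ : ℝ} (ha : 2 < a) (hξ : 0 < ξ) :
    ∫ s in Ioi ξ, s ^ (1 - a) = ξ ^ (2 - a) / (a - 2) := by
  rw [integral_Ioi_rpow_of_lt (by linarith) hξ, show 1 - a + 1 = 2 - a by ring, neg_div,
    ← div_neg, neg_sub]

namespace profileIntegrand

variable {m : ℕ}

lemma eq_mul_div (s : ℝ) : profileIntegrand m s = s * s ^ m / (1 + s ^ m) ^ 2 := by
  rw [profileIntegrand, pow_succ']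

lemma continuousOn_Ici : ContinuousOn (profileIntegrand m) (Ici 0) :=
  (continuous_pow _).continuousOn.div (by fun_prop) fun s (hs : 0 ≤ s) => by positivity

lemma le_rpow {s : ℝ} (hs : 0 < s) : profileIntegrand m s ≤ s ^ ((1 : ℝ) - m) := by
  rw [eq_mul_div, rpow_one_sub_natCast hs]
  exact mul_div_one_add_sq_le hs.le (by positivity)

lemma abs_sub_rpow_le {s : ℝ} (hs : 0 < s) :
    |profileIntegrand m s - s ^ ((1 : ℝ) - m)| ≤ 2 * s ^ (1 - 2 * (m : ℝ)) := by
  have h2m : s ^ (1 - 2 * (m : ℝ)) = s / (s ^ m) ^ 2 := by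
    rw [← pow_mul, ← rpow_one_sub_natCast hs]
    push_cast
    ring_nf
  rw [eq_mul_div, rpow_one_sub_natCast hs, h2m]
  exact abs_mul_div_one_add_sq_sub_div_le hs.le (by positivity)

lemma integrableOn_Ioi (hm : 2 < m) : IntegrableOn (profileIntegrand m) (Ioi 0) := by
  rw [← Ioc_union_Ioi_eq_Ioi zero_le_one]
  refine IntegrableOn.union ?_ ?_
  · exact (continuousOn_Ici.mono Icc_subset_Ici_self).integrableOn_Icc.mono_set
      Ioc_subset_Icc_self
  · have hexp : (1 : ℝ) - m < -1 := by
      have : (2 : ℝ) < m := by exact_mod_cast hm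
      linarith
    refine (integrableOn_Ioi_rpow_of_lt hexp one_pos).mono'
      ((continuousOn_Ici.mono (Ioi_subset_Ici zero_le_one)).aestronglyMeasurable
        measurableSet_Ioi) ?_
    filter_upwards [ae_restrict_mem measurableSet_Ioi] with s hs
    have hs : (0 : ℝ) < s := one_pos.trans hs
    rw [Real.norm_eq_abs, abs_of_nonneg (by rw [profileIntegrand]; positivity)]
    exact le_rpow hs

lemma abs_integral_Ioi_sub_le (hm : 2 < m) {ξ : ℝ} (hξ : 0 < ξ) :
    |(∫ s in Ioi ξ, profileIntegrand m s) - ξ ^ (2 - (m : ℝ)) / (m - 2)|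
      ≤ ξ ^ (2 - 2 * (m : ℝ)) / (m - 1) := by
  have hm' : (2 : ℝ) < m := by exact_mod_cast hm
  have hleading : IntegrableOn (fun s : ℝ => s ^ ((1 : ℝ) - m)) (Ioi ξ) :=
    integrableOn_Ioi_rpow_of_lt (by linarith) hξ
  have hbound : IntegrableOn (fun s : ℝ => 2 * s ^ (1 - 2 * (m : ℝ))) (Ioi ξ) :=
    (integrableOn_Ioi_rpow_of_lt (by linarith) hξ).const_mul 2
  rw [← integral_Ioi_rpow_one_sub hm' hξ, ← integral_sub
    ((integrableOn_Ioi hm).mono_set (Ioi_subset_Ioi hξ.le)) hleading, ← Real.norm_eq_abs]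
  calc ‖∫ s in Ioi ξ, (profileIntegrand m s - s ^ ((1 : ℝ) - m))‖
      ≤ ∫ s in Ioi ξ, 2 * s ^ (1 - 2 * (m : ℝ)) := by
        refine norm_integral_le_of_norm_le hbound ?_
        filter_upwards [ae_restrict_mem measurableSet_Ioi] with s hs
        exact abs_sub_rpow_le (hξ.trans hs)
    _ = ξ ^ (2 - 2 * (m : ℝ)) / (m - 1) := by
        rw [integral_const_mul, integral_Ioi_rpow_one_sub (by linarith) hξ]
        field_simp

lemma tendsto_pow_mul_integral_Ioi_sub (hm : 2 < m) :
    Tendsto (fun ξ : ℝ => ξ ^ (m - 1) * (∫ s in Ioi ξ, profileIntegrand m s) - ξ / ((m : ℝ) - 2))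
      atTop (𝓝 0) := by
  have hm' : (2 : ℝ) < m := by exact_mod_cast hm
  have hdecay : Tendsto (fun ξ : ℝ => ξ ^ (-((m : ℝ) - 1)) / (m - 1)) atTop (𝓝 0) := by
    simpa using (tendsto_rpow_neg_atTop (by linarith : (0 : ℝ) < m - 1)).div_const ((m : ℝ) - 1)
  refine squeeze_zero_norm' ?_ hdecay
  filter_upwards [eventually_gt_atTop 0] with ξ hξ
  have hlin : ξ ^ (m - 1) * ξ ^ (2 - (m : ℝ)) = ξ := by
    rw [pow_sub_one_mul_rpow hξ (by omega), show (m : ℝ) - 1 + (2 - m) = 1 by ring, rpow_one]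
  have hremainder : ξ ^ (m - 1) * ξ ^ (2 - 2 * (m : ℝ)) = ξ ^ (-((m : ℝ) - 1)) := by
    rw [pow_sub_one_mul_rpow hξ (by omega)]
    congr 1
    ring
  calc ‖ξ ^ (m - 1) * (∫ s in Ioi ξ, profileIntegrand m s) - ξ / ((m : ℝ) - 2)‖
      = ‖ξ ^ (m - 1) * ((∫ s in Ioi ξ, profileIntegrand m s) - ξ ^ (2 - (m : ℝ)) / (m - 2))‖ := by
        rw [mul_sub, ← mul_div_assoc, hlin]
    _ = ξ ^ (m - 1) * |(∫ s in Ioi ξ, profileIntegrand m s) - ξ ^ (2 - (m : ℝ)) / (m - 2)| := by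
        rw [norm_mul, norm_of_nonneg (by positivity), Real.norm_eq_abs]
    _ ≤ ξ ^ (m - 1) * (ξ ^ (2 - 2 * (m : ℝ)) / (m - 1)) := by
        gcongr
        exact abs_integral_Ioi_sub_le hm hξ
    _ = ξ ^ (-((m : ℝ) - 1)) / (m - 1) := by
        rw [← mul_div_assoc, hremainder]

end profileIntegrand

theorem tendsto_mul_integral_profileIntegrand_sub_asymptotics {m : ℕ} (hm : 2 < m) :
    Tendsto (fun ξ : ℝ =>
        ((ξ ^ m)⁻¹ + 2 + ξ ^ m) / ξ * (∫ s in (0 : ℝ)..ξ, profileIntegrand m s)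
          - (∫ s in Ioi (0 : ℝ), profileIntegrand m s) * ξ ^ (m - 1) + ξ / ((m : ℝ) - 2))
      atTop (𝓝 0) := by
  set E := ∫ s in Ioi (0 : ℝ), profileIntegrand m s
  have hint := profileIntegrand.integrableOn_Ioi hm
  have hprefactor : Tendsto (fun ξ : ℝ => ((ξ ^ m)⁻¹ + 2) / ξ) atTop (𝓝 0) := by
    have h := ((tendsto_inv_atTop_zero.comp (tendsto_pow_atTop (n := m) (by omega))).add_const
      2).mul (tendsto_inv_atTop_zero (𝕜 := ℝ))
    simpa [div_eq_mul_inv] using h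
  have hbulk := hprefactor.mul (intervalIntegral_tendsto_integral_Ioi 0 hint tendsto_id)
  have htail := (profileIntegrand.tendsto_pow_mul_integral_Ioi_sub hm).const_mul (-1)
  rw [zero_mul] at hbulk
  rw [mul_zero] at htail
  refine (add_zero (0 : ℝ) ▸ hbulk.add htail).congr' ?_
  filter_upwards [eventually_gt_atTop 0] with ξ hξ
  have hsplit : ∫ s in (0 : ℝ)..ξ, profileIntegrand m s
      = E - ∫ s in Ioi ξ, profileIntegrand m s :=
    (intervalIntegral.integral_Ioi_sub_Ioi hint hξ.le).symm
  have hpow : ξ ^ m / ξ = ξ ^ (m - 1) := by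
    rw [div_eq_iff hξ.ne', ← pow_succ, Nat.sub_add_cancel (by omega)]
  simp only [id]
  rw [add_div _ (ξ ^ m), hpow, hsplit]
  ring

/-- Let `g(ξ) = (ξ^{-2n}+2+ξ^{2n})/ξ · ∫₀^ξ s^{2n+1}/(1+s^{2n})² ds` with `n ≥ 2` and
`E_n = ∫₀^∞ s^{2n+1}/(1+s^{2n})² ds`. Then `g(ξ) − E_n ξ^{2n−1} + ξ/(2n−2) → 0` as `ξ → ∞`. -/
theorem stmt3 (n : ℕ) (hn : 2 ≤ n) :
    Filter.Tendsto (fun ξ : ℝ =>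
        ((ξ ^ (2 * n))⁻¹ + 2 + ξ ^ (2 * n)) / ξ
            * (∫ s in (0:ℝ)..ξ, s ^ (2 * n + 1) / (1 + s ^ (2 * n)) ^ 2)
          - (∫ s in Set.Ioi (0:ℝ), s ^ (2 * n + 1) / (1 + s ^ (2 * n)) ^ 2) * ξ ^ (2 * n - 1)
          + ξ / (2 * (n : ℝ) - 2))
      Filter.atTop (nhds 0) := by
  have h := tendsto_mul_integral_profileIntegrand_sub_asymptotics (m := 2 * n) (by omega)
  push_cast at h
  exact h
end

section
/- The function θ₁(ξ) = −ξ ln ξ satisfies ξ²θ₁'' + ξθ₁' − cos(2θ₀(ξ))·θ₁ = −ξ³·θ₀'(ξ) + h(ξ) where θ₀(ξ) = 2 arctan ξ and h(ξ)/ξ → 0 as ξ → ∞; more precisely, the general solution of θ₁'' + θ₁'/ξ − cos(2θ₀)/ξ² · θ₁ = −ξ θ₀' satisfies θ₁(ξ) ∼ −ξ ln ξ + c ξ as ξ → ∞ for some constant c. -/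
/-!
The scaling zero mode `zeroMode = ξ θ₀' = sin θ₀ = 2ξ/(1+ξ²)` solves the homogeneous equation, so
we look for `θ₁ = zeroMode · W` (reduction of order). With `s = zeroMode` the equation becomes
`(ξ s² W')' = ξ s · (−ξ θ₀') = −4ξ³/(1+ξ²)²`, whose primitive is
`flux = 2ξ²/(1+ξ²) − 2 log (1+ξ²)`. Integrating `W' = flux/(ξ s²)` once more is elementary except
for `∫ log (1+t²)/t dt = −Li₂(−t²)/2 + c`. That integral is `O(ξ)` since `log (1+t²) ≤ 2t`, so it
contributes `O(1)` to `s · W`; the elementary part of `s · W` is `ξ − ξ log ξ + O(1)`.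
-/

open Real Filter Topology intervalIntegral

namespace InnerCorrection

noncomputable section

def zeroMode (x : ℝ) : ℝ := 2 * x / (1 + x ^ 2)

def zeroModeDeriv (x : ℝ) : ℝ := 2 * (1 - x ^ 2) / (1 + x ^ 2) ^ 2

def flux (x : ℝ) : ℝ := 2 * x ^ 2 / (1 + x ^ 2) - 2 * log (1 + x ^ 2)

def logIntegral (x : ℝ) : ℝ := ∫ t in (1 : ℝ)..x, log (1 + t ^ 2) / t

def amplitude (x : ℝ) : ℝ :=
  x ^ 2 / 2 - x ^ 2 * log (1 + x ^ 2) / 4 + log (1 + x ^ 2) / (4 * x ^ 2) - logIntegral x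

def correction (x : ℝ) : ℝ := zeroMode x * amplitude x

def correctionDeriv (x : ℝ) : ℝ :=
  zeroModeDeriv x * amplitude x + flux x * (1 + x ^ 2) / (2 * x ^ 2)

end

lemma one_add_sq_pos (x : ℝ) : 0 < 1 + x ^ 2 := by positivity

lemma hasDerivAt_one_add_sq (x : ℝ) : HasDerivAt (fun y : ℝ => 1 + y ^ 2) (2 * x) x := by
  simpa using (hasDerivAt_pow 2 x).const_add 1

lemma cos_four_arctan (x : ℝ) :
    cos (2 * (2 * arctan x)) = 2 * ((1 - x ^ 2) / (1 + x ^ 2)) ^ 2 - 1 := by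
  have h : cos (2 * arctan x) = (1 - x ^ 2) / (1 + x ^ 2) := by
    rw [cos_two_mul, cos_sq_arctan]
    field_simp
    ring
  rw [cos_two_mul, h]

lemma hasDerivAt_zeroMode (x : ℝ) : HasDerivAt zeroMode (zeroModeDeriv x) x := by
  refine (((hasDerivAt_id x).const_mul 2).div (hasDerivAt_one_add_sq x)
    (one_add_sq_pos x).ne').congr_deriv ?_
  simp only [zeroModeDeriv, id]
  field_simp
  ring

lemma hasDerivAt_zeroModeDeriv (x : ℝ) :
    HasDerivAt zeroModeDeriv (4 * x * (x ^ 2 - 3) / (1 + x ^ 2) ^ 3) x := by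
  have hnum : HasDerivAt (fun y : ℝ => 2 * (1 - y ^ 2)) (-(4 * x)) x := by
    refine (((hasDerivAt_pow 2 x).const_sub 1).const_mul 2).congr_deriv ?_
    ring
  refine (hnum.div ((hasDerivAt_one_add_sq x).pow 2)
    (pow_ne_zero 2 (one_add_sq_pos x).ne')).congr_deriv ?_
  simp only [Pi.pow_apply]
  field_simp
  ring

lemma zeroMode_homogeneous_ode {x : ℝ} (hx : x ≠ 0) :
    4 * x * (x ^ 2 - 3) / (1 + x ^ 2) ^ 3 + zeroModeDeriv x / x
      - cos (2 * (2 * arctan x)) / x ^ 2 * zeroMode x = 0 := by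
  rw [cos_four_arctan]
  simp only [zeroModeDeriv, zeroMode]
  have := (one_add_sq_pos x).ne'
  field_simp
  ring

lemma hasDerivAt_flux (x : ℝ) : HasDerivAt flux (-(4 * x ^ 3) / (1 + x ^ 2) ^ 2) x := by
  have hS := hasDerivAt_one_add_sq x
  have hS0 := (one_add_sq_pos x).ne'
  refine ((((hasDerivAt_pow 2 x).const_mul 2).div hS hS0).sub
    ((hS.log hS0).const_mul 2)).congr_deriv ?_
  field_simp
  ring

lemma continuousOn_log_one_add_sq_div :
    ContinuousOn (fun t : ℝ => log (1 + t ^ 2) / t) (Set.Ioi 0) :=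
  ContinuousOn.div ((continuousOn_const.add (continuousOn_pow 2)).log fun t _ =>
    (one_add_sq_pos t).ne') continuousOn_id fun _ ht => (Set.mem_Ioi.mp ht).ne'

lemma intervalIntegrable_log_one_add_sq_div {x : ℝ} (hx : 0 < x) :
    IntervalIntegrable (fun t : ℝ => log (1 + t ^ 2) / t) MeasureTheory.volume 1 x :=
  (continuousOn_log_one_add_sq_div.mono fun _ ht =>
    lt_of_lt_of_le (lt_min one_pos hx) ht.1).intervalIntegrable

lemma hasDerivAt_logIntegral {x : ℝ} (hx : 0 < x) :
    HasDerivAt logIntegral (log (1 + x ^ 2) / x) x :=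
  integral_hasDerivAt_right (intervalIntegrable_log_one_add_sq_div hx)
    (continuousOn_log_one_add_sq_div.stronglyMeasurableAtFilter isOpen_Ioi x hx)
    (continuousOn_log_one_add_sq_div.continuousAt (Ioi_mem_nhds hx))

lemma hasDerivAt_amplitude {x : ℝ} (hx : 0 < x) :
    HasDerivAt amplitude (flux x * (1 + x ^ 2) ^ 2 / (4 * x ^ 3)) x := by
  have hS0 := (one_add_sq_pos x).ne'
  have hL := (hasDerivAt_one_add_sq x).log hS0
  have hsq := hasDerivAt_pow 2 x
  have hsq4 : HasDerivAt (fun y : ℝ => 4 * y ^ 2) (4 * (2 * x)) x := by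
    simpa using hsq.const_mul 4
  refine ((((hsq.div_const 2).sub ((hsq.mul hL).div_const 4)).add
    (hL.div hsq4 (by positivity))).sub (hasDerivAt_logIntegral hx)).congr_deriv ?_
  simp only [flux]
  field_simp
  ring

lemma hasDerivAt_correction {x : ℝ} (hx : 0 < x) :
    HasDerivAt correction (correctionDeriv x) x := by
  refine ((hasDerivAt_zeroMode x).mul (hasDerivAt_amplitude hx)).congr_deriv ?_
  simp only [correctionDeriv, zeroMode]
  field_simp
  ring

lemma hasDerivAt_correctionDeriv {x : ℝ} (hx : 0 < x) :
    HasDerivAt correctionDeriv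
      (4 * x * (x ^ 2 - 3) / (1 + x ^ 2) ^ 3 * amplitude x
        + zeroModeDeriv x * (flux x * (1 + x ^ 2) ^ 2 / (4 * x ^ 3))
        - 2 * x / (1 + x ^ 2) - flux x / x ^ 3) x := by
  have hsq2 : HasDerivAt (fun y : ℝ => 2 * y ^ 2) (2 * (2 * x)) x := by
    simpa using (hasDerivAt_pow 2 x).const_mul 2
  refine (((hasDerivAt_zeroModeDeriv x).mul (hasDerivAt_amplitude hx)).add
    (((hasDerivAt_flux x).mul (hasDerivAt_one_add_sq x)).div hsq2
      (by positivity))).congr_deriv ?_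
  simp only [Pi.mul_apply]
  have := (one_add_sq_pos x).ne'
  field_simp
  ring

lemma correction_ode {x : ℝ} (hx : 0 < x) :
    (4 * x * (x ^ 2 - 3) / (1 + x ^ 2) ^ 3 * amplitude x
        + zeroModeDeriv x * (flux x * (1 + x ^ 2) ^ 2 / (4 * x ^ 3))
        - 2 * x / (1 + x ^ 2) - flux x / x ^ 3)
      + correctionDeriv x / x - cos (2 * (2 * arctan x)) / x ^ 2 * correction x
      = -x * (2 / (1 + x ^ 2)) := by
  linear_combination (norm := skip) amplitude x * zeroMode_homogeneous_ode hx.ne'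
  simp only [correctionDeriv, correction, zeroModeDeriv, zeroMode]
  have := (one_add_sq_pos x).ne'
  field_simp
  ring

lemma log_one_add_sq_le {x : ℝ} (hx : 0 ≤ x) : log (1 + x ^ 2) ≤ 2 * x := by
  calc log (1 + x ^ 2) ≤ log ((1 + x) ^ 2) := log_le_log (one_add_sq_pos x) (by nlinarith)
    _ = 2 * log (1 + x) := by rw [log_pow]; norm_num
    _ ≤ 2 * x := by linarith [log_le_sub_one_of_pos (by linarith : 0 < 1 + x)]

lemma log_one_add_sq_sub_two_mul_log {x : ℝ} (hx : x ≠ 0) :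
    log (1 + x ^ 2) - 2 * log x = log (1 + 1 / x ^ 2) := by
  rw [show 1 + 1 / x ^ 2 = (1 + x ^ 2) / x ^ 2 by field_simp; ring,
    log_div (one_add_sq_pos x).ne' (pow_ne_zero 2 hx), log_pow]
  norm_num

lemma logIntegral_nonneg {x : ℝ} (hx : 1 ≤ x) : 0 ≤ logIntegral x :=
  integral_nonneg hx fun t ht =>
    div_nonneg (log_nonneg (by nlinarith [ht.1])) (by linarith [ht.1])

lemma logIntegral_le {x : ℝ} (hx : 1 ≤ x) : logIntegral x ≤ 2 * (x - 1) := by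
  have hle : logIntegral x ≤ ∫ _ in (1 : ℝ)..x, (2 : ℝ) :=
    integral_mono_on hx (intervalIntegrable_log_one_add_sq_div (by linarith))
      intervalIntegrable_const fun t ht => by
        have ht0 : 0 < t := by linarith [ht.1]
        rw [div_le_iff₀ ht0]
        linarith [log_one_add_sq_le ht0.le]
  simpa [mul_comm] using hle

lemma correction_add_mul_log_sub {x : ℝ} (hx : 0 < x) :
    correction x + x * log x - x
      = x * log (1 + x ^ 2) / (2 * (1 + x ^ 2)) + log (1 + x ^ 2) / (2 * x * (1 + x ^ 2))
        - x / (1 + x ^ 2) - x * log (1 + 1 / x ^ 2) / 2 - zeroMode x * logIntegral x := by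
  rw [← log_one_add_sq_sub_two_mul_log hx.ne']
  simp only [correction, amplitude, zeroMode]
  have := (one_add_sq_pos x).ne'
  field_simp
  ring

lemma abs_correction_add_mul_log_sub_le {x : ℝ} (hx : 1 ≤ x) :
    |correction x + x * log x - x| ≤ 6 := by
  have hx0 : 0 < x := by linarith
  have hS := one_add_sq_pos x
  have hL0 : 0 ≤ log (1 + x ^ 2) := log_nonneg (by nlinarith)
  have hL := log_one_add_sq_le hx0.le
  have he0 : 0 ≤ log (1 + 1 / x ^ 2) := log_nonneg (le_add_of_nonneg_right (by positivity))
  have he : log (1 + 1 / x ^ 2) ≤ 1 / x ^ 2 := by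
    linarith [log_le_sub_one_of_pos (by positivity : 0 < 1 + 1 / x ^ 2)]
  have hs0 : 0 ≤ zeroMode x := by unfold zeroMode; positivity
  have hLogTerm : x * log (1 + x ^ 2) / (2 * (1 + x ^ 2)) ≤ 1 := by
    rw [div_le_one (by positivity)]; nlinarith
  have hLogTerm' : log (1 + x ^ 2) / (2 * x * (1 + x ^ 2)) ≤ 1 := by
    rw [div_le_one (by positivity)]; nlinarith
  have hRational : x / (1 + x ^ 2) ≤ 1 := by
    rw [div_le_one hS]; nlinarith
  have hLogRemainder : x * log (1 + 1 / x ^ 2) / 2 ≤ 1 := by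
    have : x * (1 / x ^ 2) ≤ 1 := by
      rw [show x * (1 / x ^ 2) = 1 / x by field_simp]; exact div_le_one_of_le₀ hx hx0.le
    nlinarith
  have hIntegralTerm : zeroMode x * logIntegral x ≤ 4 := by
    have : zeroMode x * (2 * (x - 1)) ≤ 4 := by
      simp only [zeroMode]; rw [div_mul_eq_mul_div, div_le_iff₀ hS]; nlinarith
    nlinarith [logIntegral_le hx]
  have hIntegralTerm_nonneg : 0 ≤ zeroMode x * logIntegral x :=
    mul_nonneg hs0 (logIntegral_nonneg hx)
  rw [correction_add_mul_log_sub hx0, abs_le]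
  constructor
  · linarith [show 0 ≤ x * log (1 + x ^ 2) / (2 * (1 + x ^ 2)) by positivity,
      show 0 ≤ log (1 + x ^ 2) / (2 * x * (1 + x ^ 2)) by positivity]
  · linarith [show 0 ≤ x / (1 + x ^ 2) by positivity,
      show 0 ≤ x * log (1 + 1 / x ^ 2) / 2 by positivity]

end InnerCorrection

open InnerCorrection

/-- There exists a solution `θ₁` on `(0,∞)` of the linearized inner equation
`θ₁'' + θ₁'/ξ − cos(2θ₀)/ξ² · θ₁ = −ξ θ₀'`, where `θ₀(ξ) = 2 arctan ξ`
(so `θ₀'(ξ) = 2/(1+ξ²)`), with `θ₁(ξ) + ξ ln ξ − ξ` bounded as `ξ → ∞`,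
i.e. `θ₁(ξ) ∼ −ξ ln ξ + ξ`. -/
theorem stmt4 :
    ∃ θ₁ : ℝ → ℝ,
      (∀ ξ : ℝ, 0 < ξ →
        deriv (deriv θ₁) ξ + deriv θ₁ ξ / ξ
          - Real.cos (2 * (2 * Real.arctan ξ)) / ξ ^ 2 * θ₁ ξ
          = -ξ * (2 / (1 + ξ ^ 2)))
      ∧ ∃ C : ℝ, ∀ ξ : ℝ, 1 ≤ ξ → |θ₁ ξ + ξ * Real.log ξ - ξ| ≤ C := by
  refine ⟨correction, fun ξ hξ => ?_, 6, fun ξ hξ => abs_correction_add_mul_log_sub_le hξ⟩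
  have hderiv : deriv correction =ᶠ[𝓝 ξ] correctionDeriv :=
    eventually_of_mem (Ioi_mem_nhds hξ) fun y hy => (hasDerivAt_correction hy).deriv
  rw [hderiv.deriv_eq, (hasDerivAt_correctionDeriv hξ).deriv, (hasDerivAt_correction hξ).deriv]
  exact correction_ode hξ
end

section
/- Every solution of the ODE τ(σ'' − σ') = σ on (1,∞) is a linear combination of a solution asymptotic to τe^τ and a solution f with τ·f(τ) → c for some constant c as τ → ∞; in particular, there exists a nonzero solution f with f(τ) = O(1/τ) as τ → ∞. -/
/-!
The equation `τ (σ'' - σ') = σ` has the explicit solution `u τ = τ e^τ`. Its Wronskian `W`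
satisfies `W' = W`, so reduction of order produces the second solution
`f = u · ∫_τ^∞ W / u² = τ e^τ ∫_τ^∞ e^(-s) / s² ds`. Bounding `1 / s²` by `1 / τ²` under the
integral gives `0 < f τ ≤ 1 / τ`.
-/

open Set MeasureTheory Real Filter Topology

theorem hasDerivAt_integral_Ioi {E : Type*} [NormedAddCommGroup E] [NormedSpace ℝ E]
    [CompleteSpace E] {h : ℝ → E} {a τ : ℝ} (hint : IntegrableOn h (Ioi a)) (hτ : a < τ)
    (hcont : ContinuousAt h τ) :
    HasDerivAt (fun t => ∫ s in Ioi t, h s) (-h τ) τ := by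
  have hmeas : StronglyMeasurableAtFilter h (𝓝 τ) :=
    ⟨Ioi a, Ioi_mem_nhds hτ, hint.aestronglyMeasurable⟩
  have hinterval : IntervalIntegrable h volume a τ :=
    (intervalIntegrable_iff_integrableOn_Ioc_of_le hτ.le).2 (hint.mono_set Ioc_subset_Ioi_self)
  have hprimitive := (intervalIntegral.integral_hasDerivAt_right hinterval hmeas hcont).const_sub
    (∫ s in Ioi a, h s)
  refine hprimitive.congr_of_eventuallyEq ?_
  filter_upwards [Ioi_mem_nhds hτ] with t ht
  exact eq_sub_of_add_eq' (intervalIntegral.integral_interval_add_Ioi hint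
    (hint.mono_set (Ioi_subset_Ioi ht.le)))

section ReductionOfOrder

noncomputable def tailIntegral (τ : ℝ) : ℝ := ∫ s in Ioi τ, exp (-s) / s ^ 2

noncomputable def decayingSolution (τ : ℝ) : ℝ := τ * exp τ * tailIntegral τ

variable {τ : ℝ}

theorem integrableOn_exp_neg_div_sq (hτ : 0 < τ) :
    IntegrableOn (fun s => exp (-s) / s ^ 2) (Ioi τ) := by
  refine Integrable.mono' ((integrableOn_exp_neg_Ioi τ).div_const (τ ^ 2))
    (by fun_prop : Measurable fun s : ℝ => exp (-s) / s ^ 2).aestronglyMeasurable ?_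
  filter_upwards [ae_restrict_mem measurableSet_Ioi] with s hs
  rw [norm_of_nonneg (by positivity)]
  gcongr
  exact hs.le

theorem tailIntegral_pos (hτ : 0 < τ) : 0 < tailIntegral τ := by
  rw [tailIntegral, setIntegral_pos_iff_support_of_nonneg_ae
    (Eventually.of_forall fun s => by positivity) (integrableOn_exp_neg_div_sq hτ)]
  have hsupport : Function.support (fun s : ℝ => exp (-s) / s ^ 2) ∩ Ioi τ = Ioi τ :=
    inter_eq_right.2 fun s hs => (div_pos (exp_pos _) (pow_pos (hτ.trans hs) 2)).ne'
  rw [hsupport]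
  simp

theorem tailIntegral_le (hτ : 0 < τ) : tailIntegral τ ≤ exp (-τ) / τ ^ 2 :=
  calc tailIntegral τ ≤ ∫ s in Ioi τ, exp (-s) / τ ^ 2 :=
        setIntegral_mono_on (integrableOn_exp_neg_div_sq hτ)
          ((integrableOn_exp_neg_Ioi τ).div_const _) measurableSet_Ioi
          fun _ hs => by gcongr; exact hs.le
    _ = exp (-τ) / τ ^ 2 := by rw [integral_div, integral_exp_neg_Ioi]

theorem hasDerivAt_tailIntegral (hτ : 0 < τ) :
    HasDerivAt tailIntegral (-(exp (-τ) / τ ^ 2)) τ :=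
  hasDerivAt_integral_Ioi (integrableOn_exp_neg_div_sq (half_pos hτ)) (half_lt_self hτ)
    (by fun_prop (disch := positivity))

theorem hasDerivAt_decayingSolution (hτ : 0 < τ) :
    HasDerivAt decayingSolution ((1 + τ) * exp τ * tailIntegral τ - τ⁻¹) τ := by
  have h := ((hasDerivAt_id' τ).fun_mul (hasDerivAt_exp τ)).fun_mul (hasDerivAt_tailIntegral hτ)
  refine h.congr_deriv ?_
  rw [exp_neg]
  field_simp
  ring

theorem hasDerivAt_deriv_decayingSolution (hτ : 0 < τ) :
    HasDerivAt (fun t => (1 + t) * exp t * tailIntegral t - t⁻¹)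
      ((2 + τ) * exp τ * tailIntegral τ - τ⁻¹) τ := by
  have h := ((((hasDerivAt_id' τ).const_add 1).fun_mul (hasDerivAt_exp τ)).fun_mul
    (hasDerivAt_tailIntegral hτ)).fun_sub (hasDerivAt_inv hτ.ne')
  refine h.congr_deriv ?_
  rw [exp_neg]
  field_simp
  ring

theorem decayingSolution_ode (hτ : 0 < τ) :
    τ * (deriv (deriv decayingSolution) τ - deriv decayingSolution τ) = decayingSolution τ := by
  have hderiv :
      deriv decayingSolution =ᶠ[𝓝 τ] fun t => (1 + t) * exp t * tailIntegral t - t⁻¹ := by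
    filter_upwards [Ioi_mem_nhds hτ] with t ht
    exact (hasDerivAt_decayingSolution ht).deriv
  rw [hderiv.deriv_eq, (hasDerivAt_deriv_decayingSolution hτ).deriv,
    (hasDerivAt_decayingSolution hτ).deriv, decayingSolution]
  ring

theorem decayingSolution_pos (hτ : 0 < τ) : 0 < decayingSolution τ := by
  have := tailIntegral_pos hτ
  unfold decayingSolution
  positivity

theorem decayingSolution_le (hτ : 0 < τ) : decayingSolution τ ≤ 1 / τ :=
  calc decayingSolution τ ≤ τ * exp τ * (exp (-τ) / τ ^ 2) := by
        unfold decayingSolution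
        gcongr
        exact tailIntegral_le hτ
    _ = 1 / τ := by
        rw [exp_neg]
        field_simp

end ReductionOfOrder

/-- There exists a nontrivial solution `f` of the ODE `τ(σ'' − σ') = σ` on `(1,∞)`
with `f(τ) = O(1/τ)` as `τ → ∞`, i.e. `|f(τ)| ≤ C/τ` for large `τ`. -/
theorem stmt7 :
    ∃ f : ℝ → ℝ,
      (∀ τ : ℝ, 1 < τ → τ * (deriv (deriv f) τ - deriv f τ) = f τ)
      ∧ (∃ τ₀ : ℝ, 1 < τ₀ ∧ f τ₀ ≠ 0)
      ∧ ∃ C τ₁ : ℝ, 1 < τ₁ ∧ ∀ τ : ℝ, τ₁ ≤ τ → |f τ| ≤ C / τ := by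
  refine ⟨decayingSolution, fun τ hτ => decayingSolution_ode (by linarith),
    ⟨2, one_lt_two, (decayingSolution_pos two_pos).ne'⟩, 1, 2, one_lt_two, fun τ hτ => ?_⟩
  have hτ : 0 < τ := by linarith
  rw [abs_of_pos (decayingSolution_pos hτ)]
  exact decayingSolution_le hτ
end
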